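/- In the combinatorial model of C(A_3^3): the set of all 4-element subsets of ZMod 10 with no two cyclically adjacent elements and containing the vertex 1 has exactly C(5,3) = 10 elements, and these subsets are pairwise non-intertwining. -/
import Mathlib


/-- Two `(d+1)`-element subsets `X = {x_0,…,x_d}` and `Y = {y_0,…,y_d}` of the cyclically
ordered set `Fin m` *intertwine* if their elements can be ordered so that
`x_0 < y_0 < x_1 < y_1 < … < x_d < y_d < x_0` in the cyclic order. This is encoded by
measuring cyclic distances from the base point `x 0`: the interleaved sequence of
distances is strictly increasing. -/
def Intertwine (m d : ℕ) (X Y : Finset (Fin m)) : Prop :=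
  ∃ x y : Fin (d + 1) → Fin m,
    X = Finset.image x Finset.univ ∧
    Y = Finset.image y Finset.univ ∧
    (∀ i : Fin (d + 1), ((x i - x 0 : Fin m)).val < ((y i - x 0 : Fin m)).val) ∧
    (∀ i : Fin d, ((y i.castSucc - x 0 : Fin m)).val < ((x i.succ - x 0 : Fin m)).val)

/-- If `X` and `Y` intertwine, they share no common element: the interleaved cyclic
distances from the base point are strictly increasing, hence all distinct. -/
lemma intertwine_disjoint {m d : ℕ} {X Y : Finset (Fin m)} (h : Intertwine m d X Y)
    {a : Fin m} (haX : a ∈ X) (haY : a ∈ Y) : False := by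
  obtain ⟨x, y, hX, hY, h1, h2⟩ := h
  set f : Fin (d+1) → ℕ := fun i => ((x i - x 0 : Fin m)).val with hf
  set g : Fin (d+1) → ℕ := fun i => ((y i - x 0 : Fin m)).val with hg
  have hfm : StrictMono f := by
    rw [Fin.strictMono_iff_lt_succ]
    intro i; exact lt_trans (h1 i.castSucc) (h2 i)
  have hgm : StrictMono g := by
    rw [Fin.strictMono_iff_lt_succ]
    intro i; exact lt_trans (h2 i) (h1 i.succ)
  rw [hX, Finset.mem_image] at haX
  rw [hY, Finset.mem_image] at haY
  obtain ⟨i, _, hi⟩ := haX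
  obtain ⟨j, _, hj⟩ := haY
  have heq : f i = g j := by simp [hf, hg, hi, hj]
  rcases le_or_gt i j with hij | hij
  · exact absurd heq (ne_of_lt (lt_of_le_of_lt (hfm.monotone hij) (h1 j)))
  · have hj' : j.val < d := lt_of_lt_of_le (Fin.lt_iff_val_lt_val.mp hij) (Nat.lt_succ_iff.mp i.isLt)
    have : g j < f i := by
      have := h2 ⟨j.val, hj'⟩
      have h3 : (⟨j.val, hj'⟩ : Fin d).castSucc = j := rfl
      rw [h3] at this
      exact lt_of_lt_of_le this (hfm.monotone (by
        rw [Fin.le_iff_val_le_val]; simpa using hij))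
    exact absurd heq (ne_of_gt this)

/-- in the combinatorial model of $\mathscr{C}(A_3^3)$ on `Fin 10`,
the admissible 4-element subsets (no two cyclically adjacent elements) containing
the vertex 1 number exactly `C(5,3) = 10`, and they are pairwise non-intertwining. -/
theorem stmt11 :
    (Finset.univ.filter (fun X : Finset (Fin 10) =>
        X.card = 4 ∧ (1 : Fin 10) ∈ X ∧ ∀ x ∈ X, ∀ y ∈ X, y ≠ x + 1)).card
      = Nat.choose 5 3 ∧
    ∀ X ∈ Finset.univ.filter (fun X : Finset (Fin 10) =>
        X.card = 4 ∧ (1 : Fin 10) ∈ X ∧ ∀ x ∈ X, ∀ y ∈ X, y ≠ x + 1),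
      ∀ Y ∈ Finset.univ.filter (fun X : Finset (Fin 10) =>
        X.card = 4 ∧ (1 : Fin 10) ∈ X ∧ ∀ x ∈ X, ∀ y ∈ X, y ≠ x + 1),
      X ≠ Y → ¬ Intertwine 10 3 X Y := by
  constructor
  · decide
  · intro X hX Y hY _ hI
    simp only [Finset.mem_filter] at hX hY
    exact intertwine_disjoint hI hX.2.2.1 hY.2.2.1
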